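/- Let λ and η be signed Borel measures on S¹ and suppose f_λ = f_η. Then λ^a = η^a, where for a signed measure ν the anti-symmetric part is ν^a = (ν − T_#ν)/2. In other words, whenever a function f : S¹ → ℝ is represented by a signed measure λ, the anti-symmetric part λ^a of λ is uniquely determined by f. -/

import Mathlib

/-!
Write `xₜ = exp (i t) x`. Near `t = 0` the distance `d(xₜ, y)` equals `|t - θ|`, where
`θ ∈ (-π, π]` is the angle from `x` to `y`, so by dominated convergence the right derivative
of `t ↦ f_λ(xₜ)` at `0` is `λ(S¹) - 2 λ(Aₓ)`, with `Aₓ = {exp (i θ) x : 0 < θ ≤ π}`.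
Hence `f_λ = f_η` forces `μ = λ - η` to give the same mass to every half circle `Aₓ`.
Comparing `Aₓ` with its rotation by `s ∈ [0, π]`, the arc of length `s` starting at `x` and
its antipodal image have the same `μ`-mass; such arcs generate the Borel σ-algebra, so
`T_#μ = μ`, which is `λ - T_#λ = η - T_#η`.
-/

open MeasureTheory Real Filter Set Complex
open scoped ENNReal NNReal Classical

noncomputable section

instance : MeasurableSpace Circle := borel Circle
instance : BorelSpace Circle := ⟨rfl⟩

namespace CirclePaper

/-- The spherical (arc-length) distance on the unit circle `S¹ ⊆ ℝ² ≃ ℂ`: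
`d_{S¹}(x,y) = arccos ⟨x,y⟩ = arccos (Re (x * conj y))`. -/
def dS1 (x y : Circle) : ℝ := Real.arccos (((x : ℂ) * (starRingEnd ℂ) (y : ℂ)).re)

/-- The antipodal map `T x = -x` (multiplication by `exp(iπ) = -1`). -/
def antipode (x : Circle) : Circle := Circle.exp π * x

/-- Integral of a function against a signed measure (via the Jordan decomposition). -/
def sInt (l : SignedMeasure Circle) (f : Circle → ℝ) : ℝ :=
  (∫ y, f y ∂l.toJordanDecomposition.posPart) - (∫ y, f y ∂l.toJordanDecomposition.negPart)

/-- `f_λ(x) = ∫_{S¹} d_{S¹}(x,y) λ(dy)`. -/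
def fRep (l : SignedMeasure Circle) (x : Circle) : ℝ := sInt l (fun y => dS1 x y)

/-- `f : S¹ → ℝ` has left derivative `L` at `x` w.r.t. the covering `q(t) = exp(it)`,
i.e. `(f(x +_q t) - f(x))/t → L` as `t → 0⁻`. -/
def HasLeftDerivCircleAt (f : Circle → ℝ) (L : ℝ) (x : Circle) : Prop :=
  Filter.Tendsto (fun t : ℝ => (f (Circle.exp t * x) - f x) / t)
    (nhdsWithin 0 (Set.Iio 0)) (nhds L)

/-- `h : ℝ → ℝ` has left derivative `L` at `t`: `(h(t+s) - h(t))/s → L` as `s → 0⁻`. -/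
def HasLeftDerivAtR (h : ℝ → ℝ) (L : ℝ) (t : ℝ) : Prop :=
  Filter.Tendsto (fun s : ℝ => (h (t + s) - h t) / s)
    (nhdsWithin 0 (Set.Iio 0)) (nhds L)

/-- The total variation `‖g‖_{TV(S¹)}` of `g : S¹ → ℝ`: the supremum of
`Σ |g(q(t_i)) - g(q(t_{i+1}))|` over partitions `0 = t_0 ≤ … ≤ t_{n+1} = 2π`. -/
def circleTV (g : Circle → ℝ) : ℝ≥0∞ := eVariationOn (g ∘ Circle.exp) (Set.Icc 0 (2 * π))

/-- `f` is Lipschitz continuous with respect to the spherical distance. -/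
def LipschitzCircle (f : Circle → ℝ) : Prop := ∃ K : ℝ, ∀ x y, |f x - f y| ≤ K * dS1 x y

/-- The normalized Hausdorff 1-measure on `S¹`, i.e. the rotation-invariant Borel
probability measure (the pushforward of normalized Lebesgue measure on `[0, 2π)`). -/
def hausOne : Measure Circle :=
  (ENNReal.ofReal (2 * π))⁻¹ • Measure.map Circle.exp (volume.restrict (Set.Ico 0 (2 * π)))

instance : IsFiniteMeasure hausOne := by
  constructor
  have h1 : (Measure.map Circle.exp (volume.restrict (Set.Ico 0 (2 * π)))) Set.univ
      = volume (Set.Ico 0 (2 * π)) := by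
    rw [Measure.map_apply Circle.exp.continuous.measurable MeasurableSet.univ]
    simp
  simp only [hausOne, Measure.smul_apply, smul_eq_mul, h1, Real.volume_Ico]
  refine ENNReal.mul_lt_top ?_ ?_
  · exact ENNReal.inv_lt_top.mpr (ENNReal.ofReal_pos.mpr (by positivity))
  · exact ENNReal.ofReal_lt_top

/-- The half-open arc `[x, T(x)) = {x +_q t : t ∈ [0, π)}` of length `π` starting at `x`. -/
def halfArc (x : Circle) : Set Circle := (fun t : ℝ => Circle.exp t * x) '' Set.Ico 0 π

/-- A Borel measure on the circle, regarded as a signed measure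
(defined to be `0` if the measure is not finite). -/
def msigned (μ : Measure Circle) : SignedMeasure Circle :=
  if h : IsFiniteMeasure μ then @Measure.toSignedMeasure _ _ μ h else 0

open Topology

theorem arccos_cos_eq_abs {t : ℝ} (h₁ : -π ≤ t) (h₂ : t ≤ π) : arccos (cos t) = |t| := by
  rcases le_total 0 t with ht | ht
  · rw [arccos_cos ht h₂, abs_of_nonneg ht]
  · rw [← Real.cos_neg, arccos_cos (neg_nonneg.2 ht) (by linarith), abs_of_nonpos ht]

theorem arccos_cos_eq_norm_coe_addCircle (t : ℝ) :
    arccos (cos t) = ‖(t : AddCircle (2 * π))‖ := by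
  have hle : ‖(t : AddCircle (2 * π))‖ ≤ π := by
    simpa [abs_of_pos two_pi_pos] using AddCircle.norm_le_half_period (p := 2 * π) (x := t)
      two_pi_pos.ne'
  rw [AddCircle.norm_eq] at hle ⊢
  rw [← Real.cos_sub_int_mul_two_pi t (round ((2 * π)⁻¹ * t)),
    arccos_cos_eq_abs (neg_le_of_abs_le hle) (le_of_abs_le hle)]

theorem abs_arccos_cos_sub_arccos_cos_le (s t : ℝ) :
    |arccos (cos s) - arccos (cos t)| ≤ |s - t| := by
  simp only [arccos_cos_eq_norm_coe_addCircle]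
  calc |‖(s : AddCircle (2 * π))‖ - ‖(t : AddCircle (2 * π))‖|
      ≤ ‖((s - t : ℝ) : AddCircle (2 * π))‖ := by
        rw [AddCircle.coe_sub]; exact abs_norm_sub_norm_le _ _
    _ ≤ |s - t| := QuotientAddGroup.norm_mk_le_norm.trans_eq (Real.norm_eq_abs _)

theorem tendsto_slope_arccos_cos_sub {a : ℝ} (ha : a ∈ Ioc (-π) π) :
    Tendsto (fun t => (arccos (cos (t - a)) - arccos (cos (0 - a))) / t) (𝓝[>] 0)
      (𝓝 (1 - 2 * (Ioc 0 π).indicator 1 a)) := by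
  have hπ := pi_pos
  by_cases h : a ∈ Ioc 0 π
  · refine tendsto_const_nhds.congr' (eventuallyEq_of_mem (Ioo_mem_nhdsGT h.1) fun t ht => ?_)
    rw [indicator_of_mem h, arccos_cos_eq_abs (by linarith [ht.1, h.2]) (by linarith [ht.2]),
      arccos_cos_eq_abs (by linarith [h.2]) (by linarith [h.1]), abs_of_neg (by linarith [ht.2]),
      abs_of_neg (by linarith [h.1]), Pi.one_apply]
    field_simp [ht.1.ne']
    ring
  · have ha0 : a ≤ 0 := not_lt.1 fun h' => h ⟨h', ha.2⟩
    refine tendsto_const_nhds.congr'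
      (eventuallyEq_of_mem (Ioo_mem_nhdsGT (a := π + a) (by linarith [ha.1])) fun t ht => ?_)
    rw [indicator_of_notMem h, arccos_cos_eq_abs (by linarith [ht.1]) (by linarith [ht.2]),
      arccos_cos_eq_abs (by linarith) (by linarith [ha.1]), abs_of_pos (by linarith [ht.1]),
      abs_of_nonneg (by linarith)]
    field_simp [ht.1.ne']
    ring

theorem integrable_arccos_cos_sub {α : Type*} [MeasurableSpace α] (P : Measure α)
    [IsFiniteMeasure P] {g : α → ℝ} (hg : Measurable g) (t : ℝ) :
    Integrable (fun y => arccos (cos (t - g y))) P := by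
  refine Integrable.of_bound ((continuous_arccos.comp continuous_cos).measurable.comp
    (measurable_const.sub hg)).aestronglyMeasurable π (ae_of_all _ fun y => ?_)
  rw [Real.norm_eq_abs, abs_of_nonneg (arccos_nonneg _)]
  exact arccos_le_pi _

theorem tendsto_slope_integral_arccos_cos_sub {α : Type*} [MeasurableSpace α] (P : Measure α)
    [IsFiniteMeasure P] {g : α → ℝ} (hg : Measurable g) (hg_mem : ∀ y, g y ∈ Ioc (-π) π) :
    Tendsto (fun t => ((∫ y, arccos (cos (t - g y)) ∂P) - ∫ y, arccos (cos (0 - g y)) ∂P) / t)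
      (𝓝[>] 0) (𝓝 (P.real univ - 2 * P.real (g ⁻¹' Ioc 0 π))) := by
  have hlim : ∫ y, (1 - 2 * (Ioc 0 π).indicator 1 (g y)) ∂P
      = P.real univ - 2 * P.real (g ⁻¹' Ioc 0 π) := by
    have hind : (fun y => (Ioc 0 π).indicator (1 : ℝ → ℝ) (g y))
        = (g ⁻¹' Ioc 0 π).indicator 1 := by
      ext y; by_cases hy : g y ∈ Ioc 0 π <;> simp [hy]
    rw [integral_sub (integrable_const 1) ((integrable_const 1).indicator
      (hg measurableSet_Ioc) |>.const_mul 2), integral_const_mul, hind,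
      integral_indicator_one (hg measurableSet_Ioc)]
    simp
  rw [← hlim]
  refine (tendsto_integral_filter_of_dominated_convergence (fun _ => 1) ?_ ?_
    (integrable_const 1) (ae_of_all _ fun y => tendsto_slope_arccos_cos_sub (hg_mem y))).congr
    fun t => ?_
  · exact Eventually.of_forall fun t => (((integrable_arccos_cos_sub P hg t).sub
      (integrable_arccos_cos_sub P hg 0)).div_const t).aestronglyMeasurable
  · filter_upwards [self_mem_nhdsWithin] with t (ht : 0 < t)
    refine ae_of_all _ fun y => ?_
    rw [Real.norm_eq_abs, abs_div, abs_of_pos ht, div_le_one ht]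
    simpa [abs_of_pos ht] using abs_arccos_cos_sub_arccos_cos_le (t - g y) (0 - g y)
  · rw [← integral_sub (integrable_arccos_cos_sub P hg t) (integrable_arccos_cos_sub P hg 0),
      integral_div]

def angle (x y : Circle) : ℝ := arg ((y * x⁻¹ : Circle) : ℂ)

theorem angle_mem_Ioc (x y : Circle) : angle x y ∈ Ioc (-π) π :=
  ⟨neg_pi_lt_arg _, arg_le_pi _⟩

theorem measurable_angle (x : Circle) : Measurable (angle x) :=
  measurable_arg.comp ((continuous_subtype_val.comp (continuous_mul_const x⁻¹)).measurable)

theorem exp_angle_mul (x y : Circle) : Circle.exp (angle x y) * x = y := by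
  rw [angle, Circle.exp_arg, inv_mul_cancel_right]

theorem angle_exp_mul (x : Circle) {t : ℝ} (ht : t ∈ Ioc (-π) π) :
    angle x (Circle.exp t * x) = t := by
  rw [angle, mul_inv_cancel_right, Circle.arg_exp ht.1 ht.2]

theorem dS1_exp_mul_exp_mul (s t : ℝ) (x : Circle) :
    dS1 (Circle.exp s * x) (Circle.exp t * x) = arccos (cos (s - t)) := by
  have : ((Circle.exp s * x : Circle) : ℂ) * (starRingEnd ℂ) ((Circle.exp t * x : Circle) : ℂ)
      = ((Circle.exp (s - t) : Circle) : ℂ) := by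
    rw [← Circle.coe_inv_eq_conj, ← Circle.coe_mul, ← div_eq_mul_inv, mul_div_mul_right_eq_div,
      Circle.exp_sub]
  rw [dS1, this, Circle.coe_exp, exp_ofReal_mul_I_re]

theorem dS1_exp_mul (t : ℝ) (x y : Circle) :
    dS1 (Circle.exp t * x) y = arccos (cos (t - angle x y)) := by
  conv_lhs => rw [← exp_angle_mul x y]
  exact dS1_exp_mul_exp_mul t _ x

def arc (x : Circle) (a b : ℝ) : Set Circle := (fun t => Circle.exp t * x) '' Ioc a b

theorem preimage_angle_Ioc (x : Circle) {a b : ℝ} (ha : -π ≤ a) (hb : b ≤ π) :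
    angle x ⁻¹' Ioc a b = arc x a b := by
  ext y
  refine ⟨fun hy => ⟨angle x y, hy, exp_angle_mul x y⟩, ?_⟩
  rintro ⟨t, ht, rfl⟩
  rwa [mem_preimage, angle_exp_mul x ⟨ha.trans_lt ht.1, ht.2.trans hb⟩]

theorem tendsto_slope_fRep (l : SignedMeasure Circle) (x : Circle) :
    Tendsto (fun t => (fRep l (Circle.exp t * x) - fRep l x) / t) (𝓝[>] 0)
      (𝓝 (l univ - 2 * l (arc x 0 π))) := by
  have hP := tendsto_slope_integral_arccos_cos_sub l.toJordanDecomposition.posPart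
    (measurable_angle x) (angle_mem_Ioc x)
  have hN := tendsto_slope_integral_arccos_cos_sub l.toJordanDecomposition.negPart
    (measurable_angle x) (angle_mem_Ioc x)
  have harc : MeasurableSet (arc x 0 π) := by
    rw [← preimage_angle_Ioc x (by linarith [pi_pos]) le_rfl]
    exact measurable_angle x measurableSet_Ioc
  rw [l.apply_eq_posPart_real_sub_negPart_real MeasurableSet.univ,
    l.apply_eq_posPart_real_sub_negPart_real harc,
    ← preimage_angle_Ioc x (by linarith [pi_pos]) le_rfl]
  convert hP.sub hN using 2 with t
  · rw [show fRep l x = fRep l (Circle.exp 0 * x) by rw [Circle.exp_zero, one_mul]]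
    simp only [fRep, sInt, dS1_exp_mul]
    ring
  · ring

theorem image_exp_add_mul_Ioc (x : Circle) (s a b : ℝ) :
    (fun t => Circle.exp (t + s) * x) '' Ioc a b = arc x (a + s) (b + s) := by
  rw [arc, ← image_add_const_Ioc, image_image]

theorem arc_exp_mul (s : ℝ) (x : Circle) (a b : ℝ) :
    arc (Circle.exp s * x) a b = arc x (a + s) (b + s) := by
  rw [← image_exp_add_mul_Ioc, arc]
  simp only [Circle.exp_add, mul_assoc]

theorem antipode_involutive : Function.Involutive antipode := fun z => by
  rw [antipode, antipode, ← mul_assoc, ← Circle.exp_add, ← two_mul, Circle.exp_two_pi, one_mul]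

theorem measurable_antipode : Measurable antipode :=
  (continuous_const.mul continuous_id).measurable

theorem preimage_antipode_arc (x : Circle) (a b : ℝ) :
    antipode ⁻¹' arc x a b = arc x (a + π) (b + π) := by
  rw [← antipode_involutive.image_eq_preimage_symm, arc, image_image,
    ← image_exp_add_mul_Ioc]
  simp only [antipode, ← mul_assoc, ← Circle.exp_add, add_comm π]

theorem arc_union {x : Circle} {a b c : ℝ} (hac : a ≤ c) (hcb : c ≤ b) :
    arc x a c ∪ arc x c b = arc x a b := by
  rw [arc, arc, arc, ← image_union, Ioc_union_Ioc_eq_Ioc hac hcb]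

theorem injOn_exp_mul_Ioc (x : Circle) {a b : ℝ} (hab : b - a ≤ 2 * π) :
    InjOn (fun t => Circle.exp t * x) (Ioc a b) :=
  (mul_left_injective x).comp_injOn (Circle.exp_injOn_Ioc hab)

theorem measurableSet_arc (x : Circle) {a b : ℝ} (hab : b - a ≤ 2 * π) :
    MeasurableSet (arc x a b) :=
  measurableSet_Ioc.image_of_continuousOn_injOn
    (Circle.exp.continuous.mul continuous_const).continuousOn (injOn_exp_mul_Ioc x hab)

theorem disjoint_arc (x : Circle) {a b c : ℝ} (hac : a ≤ c) (hcb : c ≤ b)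
    (hab : b - a ≤ 2 * π) : Disjoint (arc x a c) (arc x c b) := by
  rw [disjoint_iff_inter_eq_empty, arc, arc, ← (injOn_exp_mul_Ioc x hab).image_inter
    (Ioc_subset_Ioc_right hcb) (Ioc_subset_Ioc_left hac), Ioc_inter_Ioc]
  simp

section VectorMeasure

variable {M : Type*} [AddCommGroup M] [TopologicalSpace M] [T2Space M]

theorem apply_arc_eq_add (μ : VectorMeasure Circle M) (x : Circle) {a b c : ℝ} (hac : a ≤ c)
    (hcb : c ≤ b) (hab : b - a ≤ 2 * π) : μ (arc x a b) = μ (arc x a c) + μ (arc x c b) := by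
  rw [← arc_union hac hcb, VectorMeasure.of_union (disjoint_arc x hac hcb hab)
    (measurableSet_arc x (by linarith)) (measurableSet_arc x (by linarith))]

theorem ext_of_apply_arc {μ ν : VectorMeasure Circle M} (huniv : μ univ = ν univ)
    (harc : ∀ a b, -π ≤ a → a ≤ b → b ≤ π → μ (arc 1 a b) = ν (arc 1 a b)) : μ = ν := by
  have hgen : (inferInstance : MeasurableSpace Circle)
      = MeasurableSpace.generateFrom (preimage (angle 1) '' {S | ∃ a b, a < b ∧ Ioc a b = S}) := by
    rw [← MeasurableSpace.comap_generateFrom, ← borel_eq_generateFrom_Ioc,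
      ← BorelSpace.measurable_eq]
    refine le_antisymm (fun E hE => ⟨Circle.exp ⁻¹' E, Circle.exp.continuous.measurable hE, ?_⟩)
      (measurable_angle 1).comap_le
    ext z
    rw [mem_preimage, mem_preimage, ← mul_one (Circle.exp _), exp_angle_mul]
  refine VectorMeasure.ext_of_generateFrom _ ?_ hgen ((isPiSystem_Ioc id id).comap _) huniv
  rintro _ ⟨_, ⟨a, b, -, rfl⟩, rfl⟩
  have hIoc : angle 1 ⁻¹' Ioc a b = angle 1 ⁻¹' Ioc (a ⊔ -π) (b ⊓ π) := by
    rw [← Ioc_inter_Ioc, preimage_inter]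
    exact (inter_eq_left.2 fun z _ => angle_mem_Ioc 1 z).symm
  rw [hIoc]
  rcases le_total (a ⊔ -π) (b ⊓ π) with h | h
  · rw [preimage_angle_Ioc 1 le_sup_right inf_le_right]
    exact harc _ _ le_sup_right h inf_le_right
  · rw [Ioc_eq_empty (not_lt.2 h), preimage_empty, VectorMeasure.empty, VectorMeasure.empty]

theorem apply_arc_eq_of_forall_le_pi {μ ν : VectorMeasure Circle M}
    (h : ∀ x s, 0 ≤ s → s ≤ π → μ (arc x 0 s) = ν (arc x 0 s)) (x : Circle) {a b : ℝ}
    (hab : a ≤ b) (hb : b ≤ a + 2 * π) : μ (arc x a b) = ν (arc x a b) := by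
  have hhalf : ∀ c d, c ≤ d → d ≤ c + π → μ (arc x c d) = ν (arc x c d) := fun c d hcd hd => by
    simpa [arc_exp_mul] using h (Circle.exp c * x) (d - c) (by linarith) (by linarith)
  set m := (a + b) / 2 with hm
  rw [apply_arc_eq_add μ x (c := m) (by linarith) (by linarith) (by linarith),
    apply_arc_eq_add ν x (c := m) (by linarith) (by linarith) (by linarith),
    hhalf a m (by linarith) (by linarith), hhalf m b (by linarith) (by linarith)]

theorem apply_preimage_antipode_arc_of_apply_arc_const {μ : VectorMeasure Circle M} {c : M}
    (hc : ∀ x, μ (arc x 0 π) = c) (x : Circle) {s : ℝ} (hs₀ : 0 ≤ s) (hs : s ≤ π) :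
    μ (antipode ⁻¹' arc x 0 s) = μ (arc x 0 s) := by
  have hπ := pi_pos
  -- `arc x 0 π` and its rotation by `s` share `arc x s π`; the remaining pieces are antipodal
  have h₁ : μ (arc x 0 s) + μ (arc x s π) = c := by
    rw [← apply_arc_eq_add μ x hs₀ hs (by linarith), hc]
  have h₂ : μ (arc x s π) + μ (arc x π (π + s)) = c := by
    rw [← apply_arc_eq_add μ x hs (by linarith) (by linarith), ← hc (Circle.exp s * x),
      arc_exp_mul, zero_add, add_comm π]
  rw [preimage_antipode_arc, zero_add, add_comm s]
  rw [← h₁, add_comm] at h₂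
  exact add_right_cancel h₂

theorem map_antipode_eq_self_of_apply_arc_const {μ : VectorMeasure Circle M} {c : M}
    (hc : ∀ x, μ (arc x 0 π) = c) : μ.map antipode = μ := by
  have hπ := pi_pos
  refine ext_of_apply_arc ?_ fun a b ha hab hb => ?_
  · rw [VectorMeasure.map_apply _ measurable_antipode MeasurableSet.univ, preimage_univ]
  · refine apply_arc_eq_of_forall_le_pi (fun x s hs₀ hs => ?_) 1 hab (by linarith)
    rw [VectorMeasure.map_apply _ measurable_antipode (measurableSet_arc x (by linarith)),
      apply_preimage_antipode_arc_of_apply_arc_const hc x hs₀ hs]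

end VectorMeasure

/-- If `f_λ = f_η`, then the anti-symmetric parts agree:
`(λ - T_#λ)/2 = (η - T_#η)/2`. -/
theorem stmt3 (lam eta : SignedMeasure Circle) (h : fRep lam = fRep eta) :
    (2⁻¹ : ℝ) • (lam - lam.map antipode) = (2⁻¹ : ℝ) • (eta - eta.map antipode) := by
  have hhalf : ∀ x, (lam - eta) (arc x 0 π) = (lam - eta) univ / 2 := fun x => by
    have hlim := tendsto_nhds_unique (h ▸ tendsto_slope_fRep lam x) (tendsto_slope_fRep eta x)
    rw [sub_apply, sub_apply]
    linarith
  have hsymm := map_antipode_eq_self_of_apply_arc_const hhalf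
  rw [← VectorMeasure.mapGm_apply, map_sub, VectorMeasure.mapGm_apply,
    VectorMeasure.mapGm_apply] at hsymm
  rw [sub_eq_sub_iff_sub_eq_sub.2 hsymm.symm]

end CirclePaper
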